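/- Let n ≥ 2 and A ⊆ ℕ finite with 0 ∈ A, and let b(k) count A-expansions of k. Let S be the subdivision operator on sequences defined by (Sg)_k = Σ_{i∈ℤ} c_{k−n·i} g_i where cᵢ is the indicator of A, and let δ be the sequence with δ_0 = 1 and δ_k = 0 otherwise. Then for every j ≥ 1 and every 0 ≤ k ≤ nʲ − 1, b(k) = (Sʲ δ)_k. -/

import Mathlib

/-- `l` is an `A`-expansion of `k` in base `n`: all digits in `A`, nonzero leading digit,
and value `k`. The empty list is the expansion of `0`. -/
def IsExpansion (n : ℕ) (A : Finset ℕ) (k : ℕ) (l : List ℕ) : Prop :=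
  (∀ d ∈ l, d ∈ A) ∧ l.getLast? ≠ some 0 ∧ Nat.ofDigits n l = k

/-- Every nonnegative integer has at most one `A`-expansion in base `n`. -/
def UniqueExpansions (n : ℕ) (A : Finset ℕ) : Prop :=
  ∀ k : ℕ, ∀ l₁ l₂ : List ℕ, IsExpansion n A k l₁ → IsExpansion n A k l₂ → l₁ = l₂

/-- The family `f` generates a free semigroup under composition: distinct nonempty
words give distinct composed functions. Composition is left-to-right:
`[u₁,…,u_p] ↦ f u₁ ∘ ⋯ ∘ f u_p`. -/
def FreeComp {α ι : Type*} (f : ι → α → α) : Prop :=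
  ∀ w₁ w₂ : List ι, w₁ ≠ [] → w₂ ≠ [] →
    (w₁.map f).foldr (· ∘ ·) id = (w₂.map f).foldr (· ∘ ·) id → w₁ = w₂

noncomputable def bcount (n : ℕ) (A : Finset ℕ) (k : ℤ) : ℕ :=
  Set.ncard {l : List ℕ |
    (∀ d ∈ l, d ∈ A) ∧ l.getLast? ≠ some 0 ∧ (Nat.ofDigits n l : ℤ) = k}

def ind (A : Finset ℕ) (i : ℤ) : ℕ := if 0 ≤ i ∧ i.toNat ∈ A then 1 else 0

/-- The subdivision operator with the indicator sequence of `A`: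
`(S g) k = ∑ᵢ c_{k - n i} g i`. -/
noncomputable def subd (n : ℕ) (A : Finset ℕ) (g : ℤ → ℕ) : ℤ → ℕ :=
  fun k => ∑ᶠ i : ℤ, ind A (k - (n : ℤ) * i) * g i

/-!
Splitting off the lowest digit, an expansion of `k ≠ 0` is `d :: t` with `d = k - n i ∈ A` and
`t` an expansion of `i`, so `b k = ∑ᵢ c (k - n i) * b i`; together with `b 0 = 1 = c 0 * b 0`
this makes `b` a fixed point of `S`. Since `(S g) k` only involves the `g i` with `n i ≤ k`,
`S` turns sequences agreeing below `m` into sequences agreeing below `n m`. As `δ` agrees with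
`b` below `1`, `Sʲ δ` agrees with `Sʲ b = b` below `nʲ`.
-/

open Set

section Subdivision

variable {n : ℕ} {A : Finset ℕ}

def expansions (n : ℕ) (A : Finset ℕ) (k : ℤ) : Set (List ℕ) :=
  {l | (∀ d ∈ l, d ∈ A) ∧ l.getLast? ≠ some 0 ∧ ((Nat.ofDigits n l : ℕ) : ℤ) = k}

lemma bcount_eq_ncard (k : ℤ) : bcount n A k = (expansions n A k).ncard := by
  simp only [bcount, expansions, Nat.coe_ofDigits]

lemma length_le_mul_ofDigits (hn : 2 ≤ n) {l : List ℕ} (hl : l.getLast? ≠ some 0) :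
    l.length ≤ n * Nat.ofDigits n l := by
  rcases eq_or_ne l [] with rfl | hne
  · simp
  obtain ⟨b, rfl⟩ : ∃ b, n = b + 2 := ⟨n - 2, by omega⟩
  have hlast : l.getLast hne ≠ 0 := fun h => hl (by rw [List.getLast?_eq_some_getLast hne, h])
  calc l.length ≤ 2 ^ l.length := Nat.lt_two_pow_self.le
    _ ≤ (b + 2) ^ l.length := Nat.pow_le_pow_left (by omega) _
    _ ≤ (b + 2) * Nat.ofDigits (b + 2) l := Nat.pow_length_le_mul_ofDigits hne hlast

lemma finite_expansions (hn : 2 ≤ n) (k : ℤ) : (expansions n A k).Finite := by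
  refine ((List.finite_length_le A (n * k.toNat)).image (List.map Subtype.val)).subset ?_
  rintro l ⟨hA, hlast, rfl⟩
  lift l to List A using hA
  refine ⟨l, ?_, rfl⟩
  simpa using length_le_mul_ofDigits hn hlast

lemma expansions_zero (hn : 2 ≤ n) : expansions n A 0 = {[]} := by
  refine Subset.antisymm ?_ (by simp [expansions])
  rintro l ⟨-, hlast, hl⟩
  have := length_le_mul_ofDigits hn hlast
  rw [Nat.cast_eq_zero.mp hl, mul_zero, Nat.le_zero, List.length_eq_zero_iff] at this
  exact this

lemma expansions_of_neg {k : ℤ} (hk : k < 0) : expansions n A k = ∅ :=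
  eq_empty_of_forall_notMem fun l ⟨_, _, hl⟩ => by omega

lemma bcount_zero (hn : 2 ≤ n) : bcount n A 0 = 1 := by
  rw [bcount_eq_ncard, expansions_zero hn, ncard_singleton]

lemma bcount_of_neg {k : ℤ} (hk : k < 0) : bcount n A k = 0 := by
  rw [bcount_eq_ncard, expansions_of_neg hk, ncard_empty]

lemma getLast?_cons_ne_some_zero_iff {d : ℕ} {t : List ℕ} :
    (d :: t).getLast? ≠ some 0 ↔ t.getLast? ≠ some 0 ∧ (t = [] → d ≠ 0) := by
  cases t <;> simp

def digitQuotients (n : ℕ) (A : Finset ℕ) (k : ℤ) : Set ℤ :=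
  {i | 0 ≤ k - n * i ∧ (k - n * i).toNat ∈ A}

lemma finite_digitQuotients (hn : n ≠ 0) (k : ℤ) : (digitQuotients n A k).Finite := by
  refine (A.finite_toSet.image fun d : ℕ => (k - d) / n).subset ?_
  rintro i ⟨hi, hiA⟩
  refine ⟨_, hiA, show (k - ((k - n * i).toNat : ℤ)) / n = i from ?_⟩
  rw [Int.toNat_of_nonneg hi, sub_sub_cancel, Int.mul_ediv_cancel_left _ (by exact_mod_cast hn)]

lemma ind_mul_eq_indicator (k i : ℤ) (a : ℤ → ℕ) :
    ind A (k - n * i) * a i = (digitQuotients n A k).indicator a i := by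
  simp only [ind, indicator_apply, digitQuotients, mem_ofPred_eq]
  split_ifs <;> simp

lemma expansions_eq_biUnion {k : ℤ} (hk : k ≠ 0) :
    expansions n A k =
      ⋃ i ∈ digitQuotients n A k, List.cons (k - n * i).toNat '' expansions n A i := by
  ext l
  simp only [mem_iUnion, mem_image, exists_prop]
  constructor
  · rintro ⟨hA, hlast, hl⟩
    cases l with
    | nil => exact absurd hl.symm hk
    | cons d t =>
      rw [Nat.ofDigits_cons, Nat.cast_add, Nat.cast_mul] at hl
      rw [List.forall_mem_cons] at hA
      rw [getLast?_cons_ne_some_zero_iff] at hlast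
      have hd : (k - n * ((Nat.ofDigits n t : ℕ) : ℤ)).toNat = d := by omega
      exact ⟨(Nat.ofDigits n t : ℕ), ⟨by omega, hd ▸ hA.1⟩, t, ⟨hA.2, hlast.1, rfl⟩, by rw [hd]⟩
  · rintro ⟨i, ⟨hi, hiA⟩, t, ⟨hA, hlast, rfl⟩, rfl⟩
    refine ⟨List.forall_mem_cons.mpr ⟨hiA, hA⟩, getLast?_cons_ne_some_zero_iff.mpr ⟨hlast, ?_⟩, ?_⟩
    · rintro rfl
      simp only [Nat.ofDigits, Nat.cast_zero, mul_zero, sub_zero] at hi ⊢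
      omega
    · rw [Nat.ofDigits_cons, Nat.cast_add, Nat.cast_mul]
      omega

lemma pairwiseDisjoint_cons_image_expansions (k : ℤ) :
    (digitQuotients n A k).PairwiseDisjoint
      fun i => List.cons (k - n * i).toNat '' expansions n A i := by
  rintro i - j - hij
  refine disjoint_left.mpr ?_
  rintro _ ⟨t, ht, rfl⟩ ⟨s, hs, hst⟩
  obtain ⟨-, rfl⟩ := List.cons_eq_cons.mp hst
  exact hij (ht.2.2.symm.trans hs.2.2)

lemma bcount_eq_finsum (hn : 2 ≤ n) {k : ℤ} (hk : k ≠ 0) :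
    bcount n A k = ∑ᶠ i, ind A (k - n * i) * bcount n A i := by
  simp_rw [ind_mul_eq_indicator, ← finsum_mem_def]
  rw [bcount_eq_ncard, expansions_eq_biUnion hk,
    (finite_digitQuotients (by omega) k).ncard_biUnion
      (fun i _ => (finite_expansions hn i).image _) (pairwiseDisjoint_cons_image_expansions k)]
  refine finsum_mem_congr rfl fun i _ => ?_
  rw [ncard_image_of_injective _ List.cons_injective, bcount_eq_ncard]

lemma subd_bcount (hn : 2 ≤ n) (h0 : 0 ∈ A) : subd n A (bcount n A) = bcount n A := by
  funext k
  rcases eq_or_ne k 0 with rfl | hk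
  · rw [subd, finsum_eq_single _ 0, bcount_zero hn]
    · simp [ind, h0]
    intro i hi
    rcases hi.lt_or_gt with hi | hi
    · rw [bcount_of_neg hi, mul_zero]
    · have : ind A (0 - n * i) = 0 := by
        rw [ind, if_neg]
        rintro ⟨h, -⟩
        have : (0 : ℤ) < n * i := mul_pos (by omega) hi
        omega
      rw [this, zero_mul]
  · exact (bcount_eq_finsum hn hk).symm

lemma subd_eqOn_Iio {g h : ℤ → ℕ} {m : ℤ} (hgh : EqOn g h (Iio m)) :
    EqOn (subd n A g) (subd n A h) (Iio (n * m)) := by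
  intro k (hk : k < n * m)
  refine finsum_congr fun i => ?_
  by_cases hi : i < m
  · rw [hgh hi]
  · rw [ind, if_neg, zero_mul, zero_mul]
    rintro ⟨hdigit, -⟩
    have : (n : ℤ) * m ≤ n * i := mul_le_mul_of_nonneg_left (not_lt.mp hi) (Int.natCast_nonneg n)
    omega

lemma iterate_subd_eqOn_Iio {g h : ℤ → ℕ} (hgh : EqOn g h (Iio 1)) (j : ℕ) :
    EqOn ((subd n A)^[j] g) ((subd n A)^[j] h) (Iio ((n : ℤ) ^ j)) := by
  induction j with
  | zero => simpa using hgh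
  | succ j ih =>
    simp only [Function.iterate_succ_apply', pow_succ']
    exact subd_eqOn_Iio ih

end Subdivision

theorem stmt4_general (n : ℕ) (hn : 2 ≤ n) (A : Finset ℕ) (h0 : 0 ∈ A)
    (j : ℕ) (k : ℤ) (hk : k ≤ (n : ℤ) ^ j - 1) :
    bcount n A k = (subd n A)^[j] (fun i => if i = 0 then 1 else 0) k := by
  have hδ : EqOn (fun i : ℤ => if i = 0 then 1 else 0) (bcount n A) (Iio 1) := by
    intro i hi
    rcases (show i ≤ 0 from Int.lt_add_one_iff.mp hi).lt_or_eq with hi | rfl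
    · simp [hi.ne, bcount_of_neg hi]
    · simp [bcount_zero hn]
  rw [iterate_subd_eqOn_Iio hδ j (show k < (n : ℤ) ^ j by omega),
    Function.iterate_fixed (subd_bcount hn h0)]

theorem stmt4 (n : ℕ) (hn : 2 ≤ n) (A : Finset ℕ) (h0 : 0 ∈ A)
    (j : ℕ) (hj : 1 ≤ j) (k : ℤ) (hk0 : 0 ≤ k) (hk : k ≤ (n : ℤ) ^ j - 1) :
    bcount n A k = (subd n A)^[j] (fun i => if i = 0 then 1 else 0) k :=
  stmt4_general n hn A h0 j k hk
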